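/- arXiv:nlin/0306040 — 2 statements merged into one kernel-verified Lean document; each statement's English description precedes it below -/
import Mathlib

section
/- (Boccara–Fukś characterization.) Let Q = {0,…,q−1} and f : Q^n → Q. Then f is conservative (f ∈ CA^0(q,n)) if and only if for all (x_1,…,x_n) ∈ Q^n: f(x_1,…,x_n) = x_1 + ∑_{k=1}^{n−1} [ f(0^{n−k}, x_2,…,x_{k+1}) − f(0^{n−k}, x_1,…,x_k) ], where 0^{n−k} denotes n−k consecutive zeros. -/
/-!
If `f x = x₀ + J(σx) - J(x)` for some flux `J`, the sum of `f` over a period telescopes to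
the sum of the states. Conversely, let `f` be conservative and compare the `2n`-periodic word
`x₀ ⋯ x_{n-1} 0ⁿ` with the same word in which `x₀` is replaced by `0`. They differ in one site
per period, so the total change of `f` over the `n` windows through that site is `x₀`. These
windows read `0^j x₀ ⋯ x_{n-1-j}` and `0^{j+1} x₁ ⋯ x_{n-1-j}`, which gives the identity with
`J` the flux `∑ₖ f(0^{n-k} x₀ ⋯ x_{k-1})`.
-/

/-- A local rule `f ∈ CA(q,n)` is conservative (`f ∈ CA^0(q,n)`) if for every period
`p ≥ 1` and every `p`-periodic (circular) word `w`, the sum of the images over one period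
equals the sum of the states over one period. -/
def Conserves (q n : ℕ) (f : (Fin n → Fin q) → Fin q) : Prop :=
  ∀ p : ℕ, 1 ≤ p → ∀ w : ℤ → Fin q, (∀ i : ℤ, w (i + (p : ℤ)) = w i) →
    ∑ k ∈ Finset.range p, ((f (fun t => w ((k : ℤ) + ((t : ℕ) : ℤ)))) : ℤ) =
    ∑ k ∈ Finset.range p, ((w (k : ℤ)) : ℤ)

/-- A local rule `f ∈ CA(q,n)` is non-increasing (`f ∈ CA^-(q,n)`) if for every period
`p ≥ 1` and every `p`-periodic (circular) word `w`, the sum of the images over one period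
is at most the sum of the states over one period. -/
def NonIncreasing (q n : ℕ) (f : (Fin n → Fin q) → Fin q) : Prop :=
  ∀ p : ℕ, 1 ≤ p → ∀ w : ℤ → Fin q, (∀ i : ℤ, w (i + (p : ℤ)) = w i) →
    ∑ k ∈ Finset.range p, ((f (fun t => w ((k : ℤ) + ((t : ℕ) : ℤ)))) : ℤ) ≤
    ∑ k ∈ Finset.range p, ((w (k : ℤ)) : ℤ)

open Finset

variable {q n : ℕ}

def window (w : ℤ → Fin q) (k : ℤ) : Fin n → Fin q := fun t => w (k + t)

def zeroPad [NeZero q] (m : ℕ) (y : ℕ → Fin q) (t : ℕ) : Fin q :=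
  if t < m then 0 else y (t - m)

def flux [NeZero q] (f : (Fin n → Fin q) → Fin q) (x : ℕ → Fin q) : ℤ :=
  ∑ k ∈ Icc 1 (n - 1), (f (fun t => zeroPad (n - k) x t) : ℤ)

theorem flux_eq_sum_Ico [NeZero q] (f : (Fin n → Fin q) → Fin q) (x : ℕ → Fin q) :
    flux f x = ∑ j ∈ Ico 1 n, (f (fun t => zeroPad j x t) : ℤ) := by
  rw [flux, show Icc 1 (n - 1) = Ico 1 n by ext; simp; omega,
    sum_Ico_reflect (fun j => (f (fun t => zeroPad j x t) : ℤ)) 1 (Nat.le_succ n)]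
  simp

theorem zeroPad_zero [NeZero q] (y : ℕ → Fin q) : zeroPad 0 y = y := by
  funext t
  simp [zeroPad]

theorem zeroPad_update_zero [NeZero q] (m : ℕ) (y : ℕ → Fin q) :
    zeroPad m (Function.update y 0 0) = zeroPad (m + 1) (fun i => y (i + 1)) := by
  funext t
  simp only [zeroPad, Function.update_apply]
  split_ifs <;> first | rfl | omega | (congr 1; omega)

theorem conserves_of_apply_eq_add_sub {f : (Fin n → Fin q) → Fin q}
    (J : (ℕ → Fin q) → ℤ)
    (hJ : ∀ x : ℕ → Fin q, (f (fun t => x t) : ℤ) = x 0 + (J (fun i => x (i + 1)) - J x)) :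
    Conserves q n f := by
  intro p _ w hw
  set X : ℕ → ℕ → Fin q := fun a i => w (a + i) with hX
  have hstep : ∀ a, (fun i => X a (i + 1)) = X (a + 1) := by
    intro a
    funext i
    simp only [hX]
    congr 1
    push_cast
    ring
  have hper : X p = X 0 := by
    funext i
    simp only [hX]
    rw [add_comm, hw]
    simp
  calc ∑ k ∈ range p, (f (fun t => w (k + t)) : ℤ)
      = ∑ k ∈ range p, ((w k : ℤ) + (J (X (k + 1)) - J (X k))) := by
        refine sum_congr rfl fun k _ => ?_
        rw [← hstep]
        simpa [hX] using hJ (X k)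
    _ = ∑ k ∈ range p, (w k : ℤ) := by
        rw [sum_add_distrib, sum_range_sub (fun k => J (X k)), hper, sub_self, add_zero]

section cyclicWord

variable [NeZero q]

def cyclicWord (n : ℕ) (x : ℕ → Fin q) (i : ℤ) : Fin q :=
  if (i % (2 * n)).toNat < n then x (i % (2 * n)).toNat else 0

theorem cyclicWord_periodic (x : ℕ → Fin q) :
    Function.Periodic (cyclicWord n x) (2 * n : ℕ) := by
  intro i
  simp [cyclicWord]

theorem cyclicWord_apply_of_lt {x : ℕ → Fin q} {i : ℤ} (hi : -n < i) (hi' : i < n) :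
    cyclicWord n x i = if 0 ≤ i then x i.toNat else 0 := by
  rcases le_or_gt 0 i with h | h
  · rw [cyclicWord, Int.emod_eq_of_lt h (by omega), if_pos (by omega), if_pos h]
  · have : i % (2 * n) = i + 2 * n := by
      rw [← Int.add_mul_emod_self_right i 1 (2 * n), one_mul]
      exact Int.emod_eq_of_lt (by omega) (by omega)
    rw [cyclicWord, this, if_neg (by omega), if_neg (by omega)]

theorem window_cyclicWord_neg {x : ℕ → Fin q} {j : ℕ} (hj : j < n) :
    window (cyclicWord n x) (-j) = fun t : Fin n => zeroPad j x t := by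
  funext t
  rw [window, cyclicWord_apply_of_lt (by omega) (by omega), zeroPad]
  split_ifs <;> first | rfl | omega | (congr 1; omega)

theorem cyclicWord_update_zero_of_not_dvd (x : ℕ → Fin q) {i : ℤ}
    (hi : ¬ ((2 * n : ℕ) : ℤ) ∣ i) :
    cyclicWord n (Function.update x 0 0) i = cyclicWord n x i := by
  unfold cyclicWord
  split_ifs with h
  · refine Function.update_of_ne (fun h0 => hi ?_) _ _
    have := Int.emod_nonneg i (b := 2 * n) (by omega)
    exact Int.dvd_iff_emod_eq_zero.2 (by push_cast; omega)
  · rfl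

end cyclicWord

namespace Conserves

variable {f : (Fin n → Fin q) → Fin q}

theorem apply_zero [NeZero q] (hC : Conserves q n f) : f 0 = 0 := by
  simpa [← Pi.zero_def] using hC 1 le_rfl 0 (fun _ => rfl)

theorem sum_window_add (hC : Conserves q n f) {p : ℕ} (hp : 1 ≤ p) {w : ℤ → Fin q}
    (hw : Function.Periodic w p) (a : ℤ) :
    ∑ k ∈ range p, (f (window w (a + k)) : ℤ) = ∑ k ∈ range p, (w (a + k) : ℤ) := by
  rw [← hC p hp (fun i => w (a + i)) (fun i => by simpa [add_assoc] using hw (a + i))]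
  refine sum_congr rfl fun k _ => ?_
  congr 3
  funext t
  exact congrArg w (add_assoc _ _ _)

theorem sum_window_neg_sub_of_eq_of_not_dvd (hC : Conserves q n f) (hn : 1 ≤ n) {p : ℕ}
    (hnp : n ≤ p) {w w' : ℤ → Fin q} (hw : Function.Periodic w p)
    (hw' : Function.Periodic w' p) (hww' : ∀ i, ¬ (p : ℤ) ∣ i → w i = w' i) :
    ∑ j ∈ range n, ((f (window w (-j)) : ℤ) - f (window w' (-j))) = w 0 - w' 0 := by
  have hp : 1 ≤ p := hn.trans hnp
  have not_dvd : ∀ i : ℤ, i ≠ 0 → |i| < p → ¬ (p : ℤ) ∣ i :=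
    fun i hi hlt hdvd => hi (Int.eq_zero_of_abs_lt_dvd hdvd hlt)
  have hfar : ∀ k ∈ Ico n p,
      window w (1 - n + k) = (window w' (1 - n + k) : Fin n → Fin q) := by
    intro k hk
    rw [mem_Ico] at hk
    funext t
    have := t.isLt
    exact hww' _ (not_dvd _ (by omega) (abs_lt.2 ⟨by omega, by omega⟩))
  have hsite : ∑ k ∈ range p, ((w (1 - n + k) : ℤ) - w' (1 - n + k)) = w 0 - w' 0 := by
    rw [sum_eq_single (n - 1)]
    · rw [show (1 - n + (n - 1 : ℕ) : ℤ) = 0 by omega]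
    · intro k hk hkn
      rw [mem_range] at hk
      rw [hww' _ (not_dvd _ (by omega) (abs_lt.2 ⟨by omega, by omega⟩)), sub_self]
    · intro h
      exact absurd (mem_range.2 (by omega)) h
  calc ∑ j ∈ range n, ((f (window w (-j)) : ℤ) - f (window w' (-j)))
      = ∑ k ∈ range n, ((f (window w (1 - n + k)) : ℤ) - f (window w' (1 - n + k))) := by
        rw [← sum_range_reflect]
        refine sum_congr rfl fun k hk => ?_
        rw [mem_range] at hk
        rw [show (-((n - 1 - k : ℕ) : ℤ)) = 1 - n + k by omega]
    _ = ∑ k ∈ range p, ((f (window w (1 - n + k)) : ℤ) - f (window w' (1 - n + k))) := by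
        rw [← sum_range_add_sum_Ico _ hnp,
          sum_eq_zero (s := Ico n p) (fun k hk => by rw [hfar k hk, sub_self]), add_zero]
    _ = ∑ k ∈ range p, ((w (1 - n + k) : ℤ) - w' (1 - n + k)) := by
        rw [sum_sub_distrib, sum_sub_distrib, hC.sum_window_add hp hw, hC.sum_window_add hp hw']
    _ = w 0 - w' 0 := hsite

theorem sum_zeroPad_sub_zeroPad_succ [NeZero q] (hC : Conserves q n f) (hn : 1 ≤ n)
    (x : ℕ → Fin q) :
    ∑ j ∈ range n, ((f (fun t => zeroPad j x t) : ℤ)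
      - f (fun t => zeroPad (j + 1) (fun i => x (i + 1)) t)) = x 0 :=
  calc _ = ∑ j ∈ range n, ((f (window (cyclicWord n x) (-j)) : ℤ)
          - f (window (cyclicWord n (Function.update x 0 0)) (-j))) := by
        refine sum_congr rfl fun j hj => ?_
        rw [window_cyclicWord_neg (mem_range.1 hj), window_cyclicWord_neg (mem_range.1 hj),
          zeroPad_update_zero]
    _ = cyclicWord n x 0 - cyclicWord n (Function.update x 0 0) 0 :=
        hC.sum_window_neg_sub_of_eq_of_not_dvd hn (p := 2 * n) (by omega)
          (cyclicWord_periodic x) (cyclicWord_periodic _)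
          (fun i hi => (cyclicWord_update_zero_of_not_dvd x hi).symm)
    _ = x 0 := by
        rw [cyclicWord_apply_of_lt (by omega) (by omega),
          cyclicWord_apply_of_lt (by omega) (by omega)]
        simp

theorem apply_eq_add_flux_sub [NeZero q] (hC : Conserves q n f) (hn : 1 ≤ n) (x : ℕ → Fin q) :
    (f (fun t => x t) : ℤ) = x 0 + (flux f (fun i => x (i + 1)) - flux f x) := by
  set G : (ℕ → Fin q) → ℕ → ℤ := fun y j => f (fun t => zeroPad j y t) with hG
  have hsite : ∑ j ∈ range n, (G x j - G (fun i => x (i + 1)) (j + 1)) = x 0 :=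
    hC.sum_zeroPad_sub_zeroPad_succ hn x
  have hshift : ∑ j ∈ range n, G (fun i => x (i + 1)) (j + 1)
      = ∑ j ∈ Ico 1 n, G (fun i => x (i + 1)) j + G (fun i => x (i + 1)) n := by
    rw [range_eq_Ico, sum_Ico_add' (G _) 0 n 1, zero_add, sum_Ico_succ_top hn]
  have hfirst : G x 0 = f (fun t => x t) := by simp [hG, zeroPad_zero]
  have hlast : G (fun i => x (i + 1)) n = 0 := by
    have : (fun t : Fin n => zeroPad n (fun i => x (i + 1)) t) = 0 :=
      funext fun t => if_pos t.isLt
    simp [hG, this, hC.apply_zero]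
  rw [sum_sub_distrib, hshift, sum_range_eq_add_Ico _ hn, hfirst, hlast] at hsite
  rw [flux_eq_sum_Ico, flux_eq_sum_Ico]
  linarith

end Conserves

/-- Boccara–Fukś characterization of conservative rules.
Words of length `n` are encoded as functions `ℕ → Fin q` (only coordinates `0,…,n-1` are
read); `g` is `f` read on the first `n` coordinates, and `pad m y` is the word
`0^m y_0 y_1 ⋯`. -/
theorem boccara_fuks
    (q n : ℕ) [NeZero q] (hn : 1 ≤ n)
    (f : (Fin n → Fin q) → Fin q)
    (g : (ℕ → Fin q) → Fin q) (hg : ∀ y, g y = f (fun t => y (t : ℕ)))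
    (pad : ℕ → (ℕ → Fin q) → ℕ → Fin q)
    (hpad : ∀ m y t, pad m y t = if t < m then 0 else y (t - m)) :
    Conserves q n f ↔
      ∀ x : ℕ → Fin q,
        ((g x : ℤ)) = ((x 0 : ℤ)) +
          ∑ k ∈ Finset.Icc 1 (n - 1),
            (((g (pad (n - k) (fun t => x (t + 1)))) : ℤ) - ((g (pad (n - k) x)) : ℤ)) := by
  obtain rfl : g = fun y => f (fun t => y t) := funext hg
  obtain rfl : pad = zeroPad := by
    funext m y t
    exact hpad m y t
  simp only [sum_sub_distrib]
  exact ⟨fun hC x => hC.apply_eq_add_flux_sub hn x, conserves_of_apply_eq_add_sub (flux f)⟩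
end

section
/- Let G be a particle automaton with states Q = {0,…,q−1} and let F = Π(G) be its global map (which is a cellular automaton). Then: (1) F is always non-increasing, i.e. for every p ≥ 1 and every p-periodic configuration c ∈ Q^ℤ, ∑_{k=0}^{p−1} F(c)_k ≤ ∑_{k=0}^{p−1} c_k; and (2) F is conservative (∑_{k=0}^{p−1} F(c)_k = ∑_{k=0}^{p−1} c_k for every p-periodic c) if and only if G is a conservative PA, i.e. no entry of any g_v on any context is † and for every c ∈ Q^ℤ and i ∈ ℤ the total number of particles arriving at i is at most q−1. -/
/-!
Count particles at their source rather than at their target. Over one period of a periodic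
configuration the particles arriving in the period are exactly those leaving it, and a cell in
state `v` emits at most `v` particles, with equality iff none of its entries is `†`; truncation
at `q − 1` can only lose more. Hence the sum never increases, and it is preserved on all
periodic configurations iff no particle vanishes and no cell overflows there. Both defects are
local, so a defect anywhere (in an arbitrary configuration, or in an arbitrary context) is
reproduced in a periodic configuration by repeating a window of width `2(ℓ + r) + 1` around it.
-/

/-- A particle automaton (PA) with states `Q = {0,…,q−1}` and neighborhood
`N = {−L,…,R}`.  For each state `v` and each context
`(u, u') ∈ Q^L × Q^R` (the states of the `L` cells to the left and the `R` cells to the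
right), `g v u u'` is a list of `v` values in `N ∪ {†}`, encoded as `Option ℤ` where
`none` is the vanishing symbol `†` and `some d` is a displacement `d ∈ {−L,…,R}`. -/
structure PA (q L R : ℕ) where
  g : (v : Fin q) → (Fin L → Fin q) → (Fin R → Fin q) → Fin (v : ℕ) → Option ℤ
  mem_range : ∀ v u u' k d, g v u u' k = some d → -(L : ℤ) ≤ d ∧ d ≤ (R : ℤ)

namespace PA

variable {q L R : ℕ}

/-- `N(c,j,i)`: the number of particles sent from cell `j` to cell `i` in
configuration `c`. -/
def count (A : PA q L R) (c : ℤ → Fin q) (j i : ℤ) : ℕ :=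
  (Finset.univ.filter fun k : Fin ((c j : ℕ)) =>
    A.g (c j) (fun t => c (j - (L : ℤ) + ((t : ℕ) : ℤ)))
      (fun t => c (j + 1 + ((t : ℕ) : ℤ))) k = some (i - j)).card

/-- The global map of the PA: `G(c)_i = min(q−1, ∑_{j∈ℤ} N(c,j,i))`. -/
noncomputable def glob [NeZero q] (A : PA q L R) (c : ℤ → Fin q) (i : ℤ) : Fin q :=
  ⟨min (q - 1) (∑ᶠ j : ℤ, A.count c j i),
    lt_of_le_of_lt (Nat.min_le_left _ _)
      (by have := Nat.pos_of_ne_zero (NeZero.ne q); omega)⟩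

/-- A PA is conservative if no entry of any `g_v` on any context is `†`, and the total
number of particles arriving at any cell is at most `q − 1` (no overflow). -/
def Conservative (A : PA q L R) : Prop :=
  (∀ v u u' k, A.g v u u' k ≠ none) ∧
  (∀ (c : ℤ → Fin q) (i : ℤ), (∑ᶠ j : ℤ, A.count c j i) ≤ q - 1)

end PA

open Finset Function

theorem Function.Periodic.sum_range_add {M : Type*} [AddCommMonoid M] {f : ℤ → M} {p : ℕ}
    (hf : Periodic f p) (a : ℤ) : ∑ k ∈ range p, f (a + k) = ∑ k ∈ range p, f k := by
  have step (b : ℤ) : ∑ k ∈ range p, f (b + 1 + k) = ∑ k ∈ range p, f (b + k) := by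
    obtain _ | m := p
    · simp
    rw [sum_range_succ, sum_range_succ']
    congr 1
    · exact sum_congr rfl fun k _ => by congr 1; push_cast; ring
    · rw [← hf (b + ((0 : ℕ) : ℤ))]; congr 1; push_cast; ring
  induction a using Int.induction_on with
  | zero => simp
  | succ n ih => rw [step, ih]
  | pred n ih => rw [← step, sub_add_cancel, ih]

/-- To check `P c i`, move `i` to `B` by a shift and repeat the window `[0, 2B]` periodically. -/
theorem forall_of_forall_periodic {α : Type*} {P : (ℤ → α) → ℤ → Prop} (B : ℕ)
    (hloc : ∀ (c c' : ℤ → α) (i : ℤ), (∀ n ∈ Icc (i - B) (i + B), c n = c' n) →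
      P c i → P c' i)
    (hshift : ∀ (c : ℤ → α) (m i : ℤ), P (fun n => c (n + m)) i → P c (i + m))
    (h : ∀ p : ℕ, 1 ≤ p → ∀ c : ℤ → α, Periodic c p → ∀ k : ℕ, k < p → P c k)
    (c : ℤ → α) (i : ℤ) : P c i := by
  set p := 2 * B + 1
  set c₁ := fun n => c (n + (i - B))
  have hper : Periodic (fun n => c₁ (n % p)) p := fun n => by simp
  have := hloc _ c₁ B (fun n hn => ?_) (h p (by omega) _ hper B (by omega))
  · simpa using hshift c (i - B) B this
  · simp only [mem_Icc] at hn
    rw [Int.emod_eq_of_lt (by omega) (by omega)]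

namespace PA

variable {q L R : ℕ} (A : PA q L R)

def moves (c : ℤ → Fin q) (j : ℤ) : Fin (c j : ℕ) → Option ℤ :=
  A.g (c j) (fun t => c (j - (L : ℤ) + ((t : ℕ) : ℤ))) (fun t => c (j + 1 + ((t : ℕ) : ℤ)))

theorem count_eq_card_moves (c : ℤ → Fin q) (j i : ℤ) :
    A.count c j i = #{k | A.moves c j k = some (i - j)} := rfl

theorem count_eq_zero {c : ℤ → Fin q} {j i : ℤ} (h : i - j ∉ Icc (-(L : ℤ)) R) :
    A.count c j i = 0 := by
  rw [count_eq_card_moves, card_eq_zero, filter_eq_empty_iff]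
  exact fun k _ hk => h (mem_Icc.2 (A.mem_range _ _ _ _ _ hk))

theorem count_congr {c c' : ℤ → Fin q} {j j' i i' : ℤ}
    (hc : ∀ n ∈ Icc (-(L : ℤ)) R, c (j + n) = c' (j' + n)) (hi : i - j = i' - j') :
    A.count c j i = A.count c' j' i' := by
  have hcell : c j = c' j' := by simpa using hc 0 (by simp)
  have hleft : (fun t : Fin L => c (j - L + (t : ℕ))) =
      fun t : Fin L => c' (j' - L + (t : ℕ)) := by
    funext t
    simp only [sub_eq_add_neg, add_assoc]
    exact hc _ (by simp only [mem_Icc]; omega)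
  have hright : (fun t : Fin R => c (j + 1 + (t : ℕ))) =
      fun t : Fin R => c' (j' + 1 + (t : ℕ)) := by
    funext t
    simp only [add_assoc]
    exact hc _ (by simp only [mem_Icc]; omega)
  unfold count
  rw [hleft, hright, hi, hcell]

theorem count_comp_add (c : ℤ → Fin q) (m j i : ℤ) :
    A.count (fun n => c (n + m)) j i = A.count c (j + m) (i + m) :=
  A.count_congr (fun n _ => by rw [add_right_comm]) (by ring)

theorem count_add_period {c : ℤ → Fin q} {p : ℤ} (hc : Periodic c p) (j i : ℤ) :
    A.count c (j + p) (i + p) = A.count c j i := by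
  rw [← count_comp_add, hc.funext]

noncomputable def inflow (c : ℤ → Fin q) (i : ℤ) : ℕ := ∑ᶠ j, A.count c j i

theorem inflow_eq_sum (c : ℤ → Fin q) (i : ℤ) :
    A.inflow c i = ∑ d ∈ Icc (-(L : ℤ)) R, A.count c (i - d) i := by
  rw [inflow, ← finsum_comp_equiv (Equiv.subLeft i)]
  refine finsum_eq_sum_of_support_subset _ fun d hd => ?_
  by_contra h
  exact hd (A.count_eq_zero (by simpa using h))

theorem inflow_comp_add (c : ℤ → Fin q) (m i : ℤ) :
    A.inflow (fun n => c (n + m)) i = A.inflow c (i + m) := by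
  simp only [inflow, count_comp_add]
  exact finsum_comp_equiv (Equiv.addRight m) (f := fun j => A.count c j (i + m))

theorem inflow_congr {c c' : ℤ → Fin q} {i : ℤ}
    (h : ∀ n ∈ Icc (i - (L + R : ℕ)) (i + (L + R : ℕ)), c n = c' n) :
    A.inflow c i = A.inflow c' i := by
  simp only [inflow_eq_sum]
  refine sum_congr rfl fun d hd => A.count_congr (fun n hn => h _ ?_) rfl
  simp only [mem_Icc] at hd hn ⊢
  omega

noncomputable def outflow (c : ℤ → Fin q) (j : ℤ) : ℕ :=
  ∑ d ∈ Icc (-(L : ℤ)) R, A.count c j (j + d)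

theorem outflow_comp_add (c : ℤ → Fin q) (m j : ℤ) :
    A.outflow (fun n => c (n + m)) j = A.outflow c (j + m) := by
  refine sum_congr rfl fun d _ => ?_
  rw [count_comp_add, add_right_comm]

theorem outflow_congr {c c' : ℤ → Fin q} {j : ℤ}
    (h : ∀ n ∈ Icc (j - (L + R : ℕ)) (j + (L + R : ℕ)), c n = c' n) :
    A.outflow c j = A.outflow c' j := by
  refine sum_congr rfl fun d hd => A.count_congr (fun n hn => h _ ?_) rfl
  simp only [mem_Icc] at hd hn ⊢
  omega

theorem outflow_eq_card (c : ℤ → Fin q) (j : ℤ) :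
    A.outflow c j = #{k | A.moves c j k ≠ none} := by
  rw [card_eq_sum_card_fiberwise (f := A.moves c j) (t := (Icc (-(L : ℤ)) R).map .some)]
  · rw [sum_map, outflow]
    refine sum_congr rfl fun d _ => ?_
    rw [count_eq_card_moves, filter_filter, add_sub_cancel_left]
    congr 1
    ext k
    simp +contextual [mem_filter]
  · intro k hk
    obtain ⟨d, hd⟩ := Option.ne_none_iff_exists'.mp (mem_filter.1 hk).2
    simpa [hd] using A.mem_range _ _ _ _ _ hd

theorem outflow_le (c : ℤ → Fin q) (j : ℤ) : A.outflow c j ≤ c j := by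
  rw [outflow_eq_card]
  exact (card_filter_le _ _).trans_eq (card_fin _)

theorem outflow_eq_iff (c : ℤ → Fin q) (j : ℤ) :
    A.outflow c j = c j ↔ ∀ k, A.moves c j k ≠ none := by
  simpa [outflow_eq_card] using
    card_filter_eq_iff (s := univ) (p := fun k => A.moves c j k ≠ none)

/-- Reindex both sides by the displacement `d`: for fixed `d` the summand
`n ↦ count c n (n + d)` is `p`-periodic, so its sum over a period may be shifted by `-d`. -/
theorem sum_inflow_eq_sum_outflow {c : ℤ → Fin q} {p : ℕ} (hc : Periodic c p) :
    ∑ k ∈ range p, A.inflow c k = ∑ k ∈ range p, A.outflow c k := by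
  have hper (d : ℤ) : Periodic (fun n => A.count c n (n + d)) p := fun n => by
    simp only [add_right_comm n (p : ℤ) d, A.count_add_period hc]
  calc ∑ k ∈ range p, A.inflow c k
      = ∑ d ∈ Icc (-(L : ℤ)) R, ∑ k ∈ range p, A.count c (-d + k) (-d + k + d) := by
        simp only [inflow_eq_sum, neg_add_cancel_comm]
        rw [sum_comm]
        simp only [neg_add_eq_sub]
    _ = ∑ k ∈ range p, A.outflow c k := by
        simp only [(hper _).sum_range_add, outflow]
        exact sum_comm

theorem exists_config_context (v : Fin q) (u : Fin L → Fin q) (u' : Fin R → Fin q) :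
    ∃ c : ℤ → Fin q, c 0 = v ∧ (fun t : Fin L => c (0 - L + (t : ℕ))) = u ∧
      (fun t : Fin R => c (0 + 1 + (t : ℕ))) = u' := by
  refine ⟨fun n => if h : -(L : ℤ) ≤ n ∧ n < 0 then u ⟨(n + L).toNat, by omega⟩
    else if h : 0 < n ∧ n ≤ R then u' ⟨(n - 1).toNat, by omega⟩ else v, by simp, ?_, ?_⟩
  · funext t
    have := t.isLt
    dsimp only
    rw [dif_pos (by omega)]
    congr
    omega
  · funext t
    have := t.isLt
    dsimp only
    rw [dif_neg (by omega), dif_pos (by omega)]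
    congr
    omega

variable [NeZero q]

theorem val_glob (c : ℤ → Fin q) (i : ℤ) :
    (A.glob c i : ℕ) = min (q - 1) (A.inflow c i) := rfl

theorem glob_le_inflow (c : ℤ → Fin q) (i : ℤ) : (A.glob c i : ℕ) ≤ A.inflow c i :=
  min_le_right _ _

theorem sum_glob_le {c : ℤ → Fin q} {p : ℕ} (hc : Periodic c p) :
    ∑ k ∈ range p, (A.glob c k : ℕ) ≤ ∑ k ∈ range p, (c k : ℕ) :=
  calc ∑ k ∈ range p, (A.glob c k : ℕ)
      ≤ ∑ k ∈ range p, A.inflow c k := sum_le_sum fun k _ => A.glob_le_inflow c k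
    _ = ∑ k ∈ range p, A.outflow c k := A.sum_inflow_eq_sum_outflow hc
    _ ≤ ∑ k ∈ range p, (c k : ℕ) := sum_le_sum fun k _ => A.outflow_le c k

theorem sum_glob_eq_iff {c : ℤ → Fin q} {p : ℕ} (hc : Periodic c p) :
    ∑ k ∈ range p, (A.glob c k : ℕ) = ∑ k ∈ range p, (c k : ℕ) ↔
      ∀ k ∈ range p, A.inflow c k ≤ q - 1 ∧ A.outflow c k = c k := by
  have hin : ∑ k ∈ range p, (A.glob c k : ℕ) = ∑ k ∈ range p, A.inflow c k ↔
      ∀ k ∈ range p, A.inflow c k ≤ q - 1 := by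
    rw [sum_eq_sum_iff_of_le fun (k : ℕ) _ => A.glob_le_inflow c k]
    simp only [val_glob, min_eq_right_iff]
  rw [forall₂_and, ← hin, ← sum_eq_sum_iff_of_le fun (k : ℕ) _ => A.outflow_le c k]
  have hio := A.sum_inflow_eq_sum_outflow hc
  have hgi := sum_le_sum fun k (_ : k ∈ range p) => A.glob_le_inflow c k
  have hoc := sum_le_sum fun k (_ : k ∈ range p) => A.outflow_le c k
  omega

theorem conservative_of_sum_glob_eq
    (h : ∀ p : ℕ, 1 ≤ p → ∀ c : ℤ → Fin q, Periodic c p →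
      ∑ k ∈ range p, (A.glob c k : ℕ) = ∑ k ∈ range p, (c k : ℕ)) :
    A.Conservative := by
  have hlocal : ∀ c i, A.inflow c i ≤ q - 1 ∧ A.outflow c i = c i := by
    refine forall_of_forall_periodic (L + R) (fun c c' i hcc' => ?_) (fun c m i => ?_)
      fun p hp c hc k hk => (A.sum_glob_eq_iff hc).1 (h p hp c hc) k (Finset.mem_range.2 hk)
    · rw [A.inflow_congr hcc', A.outflow_congr hcc', hcc' i (by simp only [mem_Icc]; omega)]
      exact id
    · rw [inflow_comp_add, outflow_comp_add]
      exact id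
  refine ⟨fun v u u' k => ?_, fun c i => (hlocal c i).1⟩
  obtain ⟨c, rfl, rfl, rfl⟩ := exists_config_context v u u'
  exact (A.outflow_eq_iff c 0).1 (hlocal c 0).2 k

end PA

/-- the global map of a particle automaton is always non-increasing, and
it is conservative if and only if the particle automaton is conservative. -/
theorem pa_global_nonincreasing_and_conservative_iff
    (q L R : ℕ) [NeZero q] (A : PA q L R)
    (F : (ℤ → Fin q) → ℤ → Fin q)
    (hF : ∀ (c : ℤ → Fin q) (i : ℤ), F c i = A.glob c i) :
    (∀ p : ℕ, 1 ≤ p → ∀ c : ℤ → Fin q, (∀ i : ℤ, c (i + (p : ℤ)) = c i) →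
        ∑ k ∈ Finset.range p, ((F c (k : ℤ) : ℕ)) ≤
        ∑ k ∈ Finset.range p, ((c (k : ℤ) : ℕ))) ∧
    ((∀ p : ℕ, 1 ≤ p → ∀ c : ℤ → Fin q, (∀ i : ℤ, c (i + (p : ℤ)) = c i) →
        ∑ k ∈ Finset.range p, ((F c (k : ℤ) : ℕ)) =
        ∑ k ∈ Finset.range p, ((c (k : ℤ) : ℕ))) ↔
      A.Conservative) := by
  obtain rfl : F = A.glob := funext fun c => funext (hF c)
  refine ⟨fun p _ c hc => A.sum_glob_le hc, A.conservative_of_sum_glob_eq, fun hA p _ c hc => ?_⟩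
  refine (A.sum_glob_eq_iff hc).2 fun k _ => ⟨hA.2 c k, ?_⟩
  exact (A.outflow_eq_iff c k).2 fun k' => hA.1 _ _ _ k'
end
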